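/- Let n ≥ 2 be an integer and let f₁(r) = −1 + Σ_{m=1}^∞ [m·(2m−2)! / (2^{3m−1}·(m!)²·∏_{j=0}^{m−1}(n+2j))]·r^{2m}. Then f₁(r) > 0 for every r > 2·√((n+2)·(√((3n+2)/(n+2)) − 1)). -/
import Mathlib

noncomputable def hplaneCoef (n m : ℕ) : ℝ :=
  ((m : ℝ) * (Nat.factorial (2*m - 2) : ℝ)) /
    ((2:ℝ)^(3*m - 1) * ((Nat.factorial m : ℝ))^2 *
      ∏ j ∈ Finset.range m, ((n : ℝ) + 2*(j : ℝ)))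

noncomputable def fOne (n : ℕ) (r : ℝ) : ℝ :=
  -1 + ∑' m : ℕ, hplaneCoef n (m+1) * r^(2*(m+1))

lemma fact_two_mul_le (k : ℕ) :
    ((Nat.factorial (2*k) : ℝ)) ≤ 4^k * ((Nat.factorial k : ℝ))^2 := by
  induction k with
  | zero => simp
  | succ k ih =>
      have h1 : 2 * (k+1) = 2*k + 1 + 1 := by ring
      rw [h1, Nat.factorial_succ, Nat.factorial_succ, Nat.factorial_succ]
      push_cast
      have hf : (0:ℝ) ≤ (Nat.factorial (2*k) : ℝ) := by positivity
      have h4 : (0:ℝ) < 4^k := by positivity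
      have hk : (0:ℝ) ≤ (k:ℝ) := Nat.cast_nonneg k
      rw [pow_succ]
      have key : ((2*(k:ℝ)+2)*(2*(k:ℝ)+1)) * (4^k*((Nat.factorial k : ℝ))^2)
          ≤ (4*((k:ℝ)+1)^2) * (4^k*((Nat.factorial k : ℝ))^2) :=
        mul_le_mul_of_nonneg_right (by nlinarith) (by positivity)
      nlinarith [key, mul_le_mul_of_nonneg_left ih
        (show (0:ℝ) ≤ (2*(k:ℝ)+2) * (2*(k:ℝ)+1) by nlinarith)]

lemma prod_lower (n k : ℕ) (hn : 2 ≤ n) :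
    (2:ℝ)^k * Nat.factorial k ≤ ∏ j ∈ Finset.range k, ((n : ℝ) + 2*(j : ℝ)) := by
  have h1 : (2:ℝ)^k * Nat.factorial k = ∏ j ∈ Finset.range k, (2 + 2*(j:ℝ)) := by
    have : ∀ j : ℕ, (2:ℝ) + 2*(j:ℝ) = 2 * ((j:ℝ) + 1) := by intro j; ring
    simp_rw [this]
    rw [Finset.prod_mul_distrib, Finset.prod_const, Finset.card_range]
    congr 1
    rw [← Nat.cast_one, ← Finset.prod_range_add_one_eq_factorial k]
    push_cast; rfl
  rw [h1]
  apply Finset.prod_le_prod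
  · intro j _; positivity
  · intro j _
    have : (2:ℝ) ≤ (n:ℝ) := by exact_mod_cast hn
    linarith

lemma coef_pos (n m : ℕ) (hn : 2 ≤ n) : 0 < hplaneCoef n (m+1) := by
  have hn0 : (0:ℝ) < n := by exact_mod_cast lt_of_lt_of_le two_pos hn
  unfold hplaneCoef
  apply div_pos
  · have h1 : (0:ℝ) < ((m+1 : ℕ) : ℝ) := by exact_mod_cast Nat.succ_pos m
    have h2 : (0:ℝ) < (Nat.factorial (2*(m+1)-2) : ℝ) := by
      exact_mod_cast Nat.factorial_pos _
    exact mul_pos h1 h2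
  · have h3 : (0:ℝ) < (Nat.factorial (m+1) : ℝ) := by exact_mod_cast Nat.factorial_pos _
    refine mul_pos (mul_pos (by positivity) (by positivity)) ?_
    exact Finset.prod_pos fun j _ => by positivity

lemma coef_le (n m : ℕ) (hn : 2 ≤ n) :
    hplaneCoef n (m+1) ≤ (1/2)^m / (Nat.factorial m : ℝ) := by
  have hn0 : (0:ℝ) < n := by exact_mod_cast lt_of_lt_of_le two_pos hn
  have hFpos : (0:ℝ) < (Nat.factorial m : ℝ) := by exact_mod_cast Nat.factorial_pos m
  have hF : (1:ℝ) ≤ (Nat.factorial m : ℝ) := by exact_mod_cast Nat.one_le_iff_ne_zero.mpr (Nat.factorial_ne_zero m)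
  have hF1 : ((Nat.factorial (m+1) : ℕ) : ℝ) = ((m:ℝ)+1) * (Nat.factorial m : ℝ) := by
    rw [Nat.factorial_succ]; push_cast; ring
  have hP := prod_lower n (m+1) hn
  have hPpos : 0 < ∏ j ∈ Finset.range (m+1), ((n:ℝ)+2*(j:ℝ)) :=
    Finset.prod_pos fun j _ => by positivity
  have hT := fact_two_mul_le m
  unfold hplaneCoef
  rw [show 2*(m+1)-2 = 2*m from by omega, show 3*(m+1)-1 = 3*m+2 from by omega]
  have hF1pos : (0:ℝ) < (Nat.factorial (m+1) : ℝ) := by exact_mod_cast Nat.factorial_pos (m+1)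
  have hD'pos : (0:ℝ) < (2:ℝ)^(3*m+2) * ((Nat.factorial (m+1) : ℝ))^2 *
      ((2:ℝ)^(m+1) * (Nat.factorial (m+1) : ℝ)) := by positivity
  have hNnn : (0:ℝ) ≤ ((m+1 : ℕ) : ℝ) * (Nat.factorial (2*m) : ℝ) := by positivity
  calc (((m+1:ℕ)):ℝ) * (Nat.factorial (2*m) : ℝ) /
        ((2:ℝ)^(3*m+2) * ((Nat.factorial (m+1) : ℝ))^2 *
          ∏ j ∈ Finset.range (m+1), ((n:ℝ)+2*(j:ℝ)))
      ≤ (((m+1:ℕ)):ℝ) * (Nat.factorial (2*m) : ℝ) /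
        ((2:ℝ)^(3*m+2) * ((Nat.factorial (m+1) : ℝ))^2 *
          ((2:ℝ)^(m+1) * (Nat.factorial (m+1) : ℝ))) := by
        apply div_le_div_of_nonneg_left hNnn hD'pos
        have h2 : (0:ℝ) < (2:ℝ)^(3*m+2) * ((Nat.factorial (m+1) : ℝ))^2 := by positivity
        exact mul_le_mul_of_nonneg_left hP h2.le
    _ ≤ (1/2)^m / (Nat.factorial m : ℝ) := by
        rw [show ((1:ℝ)/2)^m / (Nat.factorial m : ℝ) = 1 / ((2:ℝ)^m * (Nat.factorial m : ℝ)) from by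
          rw [div_pow, one_pow, div_div]]
        rw [div_le_div_iff₀ hD'pos (by positivity)]
        push_cast
        have key : ((m:ℝ)+1) * (Nat.factorial (2*m) : ℝ) * ((2:ℝ)^m * (Nat.factorial m : ℝ))
            ≤ ((m:ℝ)+1) * ((4:ℝ)^m * ((Nat.factorial m : ℝ))^2) * ((2:ℝ)^m * (Nat.factorial m : ℝ)) := by
          have h1 : (0:ℝ) ≤ (m:ℝ)+1 := by positivity
          have h2 : (0:ℝ) ≤ (2:ℝ)^m * (Nat.factorial m : ℝ) := by positivity
          exact mul_le_mul_of_nonneg_right (mul_le_mul_of_nonneg_left hT h1) h2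
        refine key.trans ?_
        rw [hF1, show (4:ℝ)^m = ((2:ℝ)^m)^2 from by
          rw [show (4:ℝ) = 2^2 from by norm_num, ← pow_mul, mul_comm 2 m, pow_mul],
          show (2:ℝ)^(3*m+2) = ((2:ℝ)^m)^3 * 4 from by
            rw [pow_add, show 3*m = m*3 from mul_comm 3 m, pow_mul]; norm_num,
          show (2:ℝ)^(m+1) = (2:ℝ)^m * 2 from by rw [pow_succ]]
        have hx : (1:ℝ) ≤ (2:ℝ)^m := one_le_pow₀ (by norm_num)
        have hm1 : (1:ℝ) ≤ (m:ℝ)+1 := by have := Nat.cast_nonneg (α := ℝ) m; linarith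
        have base : (0:ℝ) ≤ ((m:ℝ)+1) * ((2:ℝ)^m)^3 * ((Nat.factorial m : ℝ))^3 := by positivity
        nlinarith [mul_le_mul_of_nonneg_left
          (show (1:ℝ) ≤ 8*(2:ℝ)^m*((m:ℝ)+1)^2 by nlinarith) base, hx, hm1, hFpos]

lemma term_nonneg (n m : ℕ) (hn : 2 ≤ n) (r : ℝ) :
    0 ≤ hplaneCoef n (m+1) * r^(2*(m+1)) := by
  apply mul_nonneg (coef_pos n m hn).le
  rw [pow_mul]; positivity

set_option maxHeartbeats 1000000 in
lemma summable_terms (n : ℕ) (hn : 2 ≤ n) (r : ℝ) :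
    Summable (fun m : ℕ => hplaneCoef n (m+1) * r^(2*(m+1))) := by
  refine Summable.of_nonneg_of_le (fun m => term_nonneg n m hn r)
    (f := fun m => r^2 * ((r^2/2)^m / (Nat.factorial m : ℝ))) ?_
    ((Real.summable_pow_div_factorial (r^2/2)).mul_left (r^2))
  intro m
  have h1 := coef_le n m hn
  have h2 : (0:ℝ) ≤ r^(2*(m+1)) := by rw [pow_mul]; positivity
  calc hplaneCoef n (m+1) * r^(2*(m+1))
      ≤ ((1/2)^m / (Nat.factorial m : ℝ)) * r^(2*(m+1)) :=
        mul_le_mul_of_nonneg_right h1 h2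
    _ = r^2 * ((r^2/2)^m / (Nat.factorial m : ℝ)) := by
        rw [pow_mul, pow_succ, show (r^2/2)^m = (r^2)^m * (1/2)^m from by
          rw [div_eq_mul_one_div, mul_pow]]
        ring

lemma coef_one (n : ℕ) (hn : 2 ≤ n) : hplaneCoef n 1 = 1/(4*(n:ℝ)) := by
  have hn0 : (0:ℝ) < n := by exact_mod_cast lt_of_lt_of_le two_pos hn
  simp [hplaneCoef, Nat.factorial]
  norm_num

lemma coef_two (n : ℕ) (hn : 2 ≤ n) : hplaneCoef n 2 = 1/(32*((n:ℝ)*((n:ℝ)+2))) := by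
  have hn0 : (0:ℝ) < n := by exact_mod_cast lt_of_lt_of_le two_pos hn
  simp [hplaneCoef, Finset.prod_range_succ, Nat.factorial]
  norm_num
  field_simp
  ring

/-- `f₁(r) > 0` for every `r > 2√((n+2)(√((3n+2)/(n+2)) − 1))`. -/
theorem stmt14 (n : ℕ) (hn : 2 ≤ n) :
    ∀ r : ℝ,
      2 * Real.sqrt (((n : ℝ) + 2) * (Real.sqrt ((3*(n : ℝ) + 2)/((n : ℝ) + 2)) - 1)) < r →
      0 < fOne n r := by
  intro r hr
  have hnR : (2:ℝ) ≤ (n:ℝ) := by exact_mod_cast hn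
  have hn0 : (0:ℝ) < n := by linarith
  set s := Real.sqrt ((3*(n:ℝ) + 2)/((n:ℝ) + 2)) with hs_def
  have hq1 : (1:ℝ) ≤ (3*(n:ℝ) + 2)/((n:ℝ) + 2) := by
    rw [le_div_iff₀ (by linarith)]; linarith
  have hs1 : (1:ℝ) ≤ s := by
    rw [hs_def, show (1:ℝ) = Real.sqrt 1 from (Real.sqrt_one).symm]
    exact Real.sqrt_le_sqrt hq1
  have hs2 : s^2 * ((n:ℝ)+2) = 3*(n:ℝ)+2 := by
    rw [hs_def, Real.sq_sqrt (by linarith)]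
    field_simp
  have hT0 : (0:ℝ) ≤ 2 * Real.sqrt (((n:ℝ) + 2) * (s - 1)) := by positivity
  have hrpos : 0 < r := lt_of_le_of_lt hT0 hr
  have hr2 : 4*((n:ℝ)+2)*(s-1) < r^2 := by
    have h := pow_lt_pow_left₀ hr hT0 two_ne_zero
    rw [mul_pow, Real.sq_sqrt (by nlinarith)] at h
    nlinarith [h]
  -- quadratic inequality
  have hquad : 32*(n:ℝ)*((n:ℝ)+2) < (r^2)^2 + 8*((n:ℝ)+2)*r^2 := by
    have hx0 : (0:ℝ) ≤ 4*((n:ℝ)+2)*(s-1) := by nlinarith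
    nlinarith [mul_pos (sub_pos.2 hr2)
      (show (0:ℝ) < r^2 + 4*((n:ℝ)+2)*(s-1) + 8*((n:ℝ)+2) by nlinarith), hs2]
  -- lower bound tsum by first two terms
  have hsum := summable_terms n hn r
  have hge := Summable.sum_le_tsum (Finset.range 2) (fun i _ => term_nonneg n i hn r) hsum
  rw [Finset.sum_range_succ, Finset.sum_range_one] at hge
  norm_num at hge
  rw [coef_one n hn, coef_two n hn] at hge
  have hfinal : (1:ℝ) < 1/(4*(n:ℝ))*r^2 + 1/(32*((n:ℝ)*((n:ℝ)+2)))*r^4 := by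
    have h32 : (0:ℝ) < 32*((n:ℝ)*((n:ℝ)+2)) := by positivity
    have key : 1/(4*(n:ℝ))*r^2 + 1/(32*((n:ℝ)*((n:ℝ)+2)))*r^4
        = (8*((n:ℝ)+2)*r^2 + (r^2)^2)/(32*((n:ℝ)*((n:ℝ)+2))) := by
      field_simp; ring
    rw [key, lt_div_iff₀ h32]
    nlinarith [hquad]
  unfold fOne
  linarith [hge, hfinal]
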